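/- Let ā, b̄, c̄, d̄, ē be real numbers each in the interval [−1, 1], and define S(x,y) = 2ā² cos²x sin²y + 2b̄² sin²x cos²y + cos 2x cos 2y + 2āb̄ sin 2x sin 2y + c̄d̄ sin 2x sin 2y − ē² cos²x cos²y. Then for all (x,y) ∈ [0, π/2] × [0, π/2], one has S(x,y) ≤ 2 sin²(x+y) + cos(2x−2y) + sin 2x sin 2y ≤ 4. -/

import Mathlib

open Real

/-! The gap between the two sides of the first inequality is a sum of four terms, each nonnegative
because `|ā|, |b̄|, |c̄|, |d̄| ≤ 1` and `sin 2x sin 2y ≥ 0`; in the second inequality each of the three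
summands is bounded separately. -/

theorem mul_le_one_of_mem_Icc {a b : ℝ} (ha : a ∈ Set.Icc (-1 : ℝ) 1)
    (hb : b ∈ Set.Icc (-1 : ℝ) 1) : a * b ≤ 1 :=
  calc a * b ≤ |a| * |b| := (le_abs_self _).trans (abs_mul a b).le
    _ ≤ 1 := mul_le_one₀ (abs_le.2 ha) (abs_nonneg b) (abs_le.2 hb)

theorem sin_two_mul_nonneg_of_mem_Icc {x : ℝ} (hx : x ∈ Set.Icc (0 : ℝ) (π / 2)) :
    0 ≤ sin (2 * x) :=
  sin_nonneg_of_nonneg_of_le_pi (by linarith [hx.1]) (by linarith [hx.2])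

noncomputable def S (a b c d e x y : ℝ) : ℝ :=
  2 * a ^ 2 * cos x ^ 2 * sin y ^ 2 + 2 * b ^ 2 * sin x ^ 2 * cos y ^ 2
    + cos (2 * x) * cos (2 * y) + 2 * a * b * sin (2 * x) * sin (2 * y)
    + c * d * sin (2 * x) * sin (2 * y) - e ^ 2 * cos x ^ 2 * cos y ^ 2

theorem sub_S_eq (a b c d e x y : ℝ) :
    2 * sin (x + y) ^ 2 + cos (2 * x - 2 * y) + sin (2 * x) * sin (2 * y) - S a b c d e x y
      = 2 * (1 - a ^ 2) * (cos x * sin y) ^ 2 + 2 * (1 - b ^ 2) * (sin x * cos y) ^ 2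
        + (3 - 2 * (a * b) - c * d) * (sin (2 * x) * sin (2 * y)) + e ^ 2 * (cos x * cos y) ^ 2 := by
  rw [S, sin_add, cos_sub, sin_two_mul x, sin_two_mul y]
  ring

theorem S_le {a b c d x y : ℝ} (e : ℝ) (ha : a ∈ Set.Icc (-1 : ℝ) 1)
    (hb : b ∈ Set.Icc (-1 : ℝ) 1) (hc : c ∈ Set.Icc (-1 : ℝ) 1) (hd : d ∈ Set.Icc (-1 : ℝ) 1)
    (hx : x ∈ Set.Icc (0 : ℝ) (π / 2)) (hy : y ∈ Set.Icc (0 : ℝ) (π / 2)) :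
    S a b c d e x y ≤ 2 * sin (x + y) ^ 2 + cos (2 * x - 2 * y) + sin (2 * x) * sin (2 * y) := by
  have hsin : 0 ≤ sin (2 * x) * sin (2 * y) :=
    mul_nonneg (sin_two_mul_nonneg_of_mem_Icc hx) (sin_two_mul_nonneg_of_mem_Icc hy)
  have ha2 := mul_le_one_of_mem_Icc ha ha
  have hb2 := mul_le_one_of_mem_Icc hb hb
  have hab := mul_le_one_of_mem_Icc ha hb
  have hcd := mul_le_one_of_mem_Icc hc hd
  rw [← sub_nonneg, sub_S_eq]
  have : 0 ≤ 3 - 2 * (a * b) - c * d := by linarith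
  have : 0 ≤ 1 - a ^ 2 := by linarith [sq a]
  have : 0 ≤ 1 - b ^ 2 := by linarith [sq b]
  positivity

theorem two_sin_add_sq_add_cos_sub_add_sin_mul_sin_le_four (x y : ℝ) :
    2 * sin (x + y) ^ 2 + cos (2 * x - 2 * y) + sin (2 * x) * sin (2 * y) ≤ 4 := by
  have := sin_sq_le_one (x + y)
  have := cos_le_one (2 * x - 2 * y)
  have := mul_le_one_of_mem_Icc (sin_mem_Icc (2 * x)) (sin_mem_Icc (2 * y))
  linarith

theorem S_upper_estimate_general (a b c d e : ℝ)
    (ha : a ∈ Set.Icc (-1 : ℝ) 1) (hb : b ∈ Set.Icc (-1 : ℝ) 1)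
    (hc : c ∈ Set.Icc (-1 : ℝ) 1) (hd : d ∈ Set.Icc (-1 : ℝ) 1)
    (x y : ℝ) (hx : x ∈ Set.Icc (0 : ℝ) (π / 2))
    (hy : y ∈ Set.Icc (0 : ℝ) (π / 2)) :
    2 * a ^ 2 * Real.cos x ^ 2 * Real.sin y ^ 2
        + 2 * b ^ 2 * Real.sin x ^ 2 * Real.cos y ^ 2
        + Real.cos (2 * x) * Real.cos (2 * y)
        + 2 * a * b * Real.sin (2 * x) * Real.sin (2 * y)
        + c * d * Real.sin (2 * x) * Real.sin (2 * y)
        - e ^ 2 * Real.cos x ^ 2 * Real.cos y ^ 2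
      ≤ 2 * Real.sin (x + y) ^ 2 + Real.cos (2 * x - 2 * y)
          + Real.sin (2 * x) * Real.sin (2 * y)
    ∧ 2 * Real.sin (x + y) ^ 2 + Real.cos (2 * x - 2 * y)
          + Real.sin (2 * x) * Real.sin (2 * y) ≤ 4 :=
  ⟨S_le e ha hb hc hd hx hy, two_sin_add_sq_add_cos_sub_add_sin_mul_sin_le_four x y⟩

/-- **Estimate (3.34).** Let `ā, b̄, c̄, d̄, ē ∈ [−1, 1]` and let
`S(x,y) = 2ā² cos²x sin²y + 2b̄² sin²x cos²y + cos 2x cos 2y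
+ 2āb̄ sin 2x sin 2y + c̄d̄ sin 2x sin 2y − ē² cos²x cos²y`.
Then for all `(x, y) ∈ [0, π/2] × [0, π/2]`,
`S(x,y) ≤ 2 sin²(x+y) + cos(2x−2y) + sin 2x sin 2y ≤ 4`. -/
theorem S_upper_estimate (a b c d e : ℝ)
    (ha : a ∈ Set.Icc (-1 : ℝ) 1) (hb : b ∈ Set.Icc (-1 : ℝ) 1)
    (hc : c ∈ Set.Icc (-1 : ℝ) 1) (hd : d ∈ Set.Icc (-1 : ℝ) 1)
    (he : e ∈ Set.Icc (-1 : ℝ) 1)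
    (x y : ℝ) (hx : x ∈ Set.Icc (0 : ℝ) (π / 2))
    (hy : y ∈ Set.Icc (0 : ℝ) (π / 2)) :
    2 * a ^ 2 * Real.cos x ^ 2 * Real.sin y ^ 2
        + 2 * b ^ 2 * Real.sin x ^ 2 * Real.cos y ^ 2
        + Real.cos (2 * x) * Real.cos (2 * y)
        + 2 * a * b * Real.sin (2 * x) * Real.sin (2 * y)
        + c * d * Real.sin (2 * x) * Real.sin (2 * y)
        - e ^ 2 * Real.cos x ^ 2 * Real.cos y ^ 2
      ≤ 2 * Real.sin (x + y) ^ 2 + Real.cos (2 * x - 2 * y)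
          + Real.sin (2 * x) * Real.sin (2 * y)
    ∧ 2 * Real.sin (x + y) ^ 2 + Real.cos (2 * x - 2 * y)
          + Real.sin (2 * x) * Real.sin (2 * y) ≤ 4 :=
  S_upper_estimate_general a b c d e ha hb hc hd x y hx hy
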